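/- (Bivector normal form of a Lagrangian subspace) Let V be a finite-dimensional real vector space and L ⊆ 𝕋V = V × V* a Lagrangian subspace with respect to the pairing ⟨(u,ξ),(v,η)⟩ = ξ(v) + η(u), and let K := {v ∈ V : (v,0) ∈ L}. Then there exists a skew-symmetric linear map π : V* → V (i.e., η(π(ξ)) = −ξ(π(η)) for all ξ,η ∈ V*) such that L = {(v + π(ξ), ξ) : v ∈ K, ξ ∈ ann(K)}, where ann(K) := {ξ ∈ V* : ξ vanishes on K}. -/

import Mathlib

/-!
Isotropy of `L` puts its projection to `V*` inside `ann K`, and maximality (`L = L^⊥`), through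
the double annihilator in finite dimension, makes it all of `ann K`. A linear section `s` of this
projection then gives `L = K × 0 + graph s`, and isotropy says exactly that `(α, β) ↦ β (s α)` is
skew on `ann K`. To extend this to all of `V*`, take a projection `q` of `V` with kernel `K`: its
transpose `ξ ↦ ξ ∘ q` projects `V*` onto `ann K`, and `π := q ∘ s ∘ qᵀ` is skew on `V*` and still
agrees with `s` modulo `K` on `ann K`.
-/

open Module

variable {V W : Type*} [AddCommGroup V] [Module ℝ V] [AddCommGroup W] [Module ℝ W]

/-- The canonical symmetric pairing on the generalized tangent space `𝕋V = V × V*`: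
`⟨(u,ξ),(v,η)⟩ = ξ(v) + η(u)`. -/
noncomputable def gpair : (V × Module.Dual ℝ V) →ₗ[ℝ] (V × Module.Dual ℝ V) →ₗ[ℝ] ℝ :=
  LinearMap.mk₂ ℝ (fun a b => a.2 b.1 + b.2 a.1)
    (fun a a' b => by
      simp only [Prod.fst_add, Prod.snd_add, LinearMap.add_apply, map_add]; ring)
    (fun r a b => by
      simp only [Prod.smul_fst, Prod.smul_snd, LinearMap.smul_apply, map_smul,
        smul_eq_mul]; ring)
    (fun a b b' => by
      simp only [Prod.fst_add, Prod.snd_add, LinearMap.add_apply, map_add]; ring)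
    (fun r a b => by
      simp only [Prod.smul_fst, Prod.smul_snd, LinearMap.smul_apply, map_smul,
        smul_eq_mul]; ring)

/-- Orthogonal complement with respect to the canonical pairing on `𝕋V`. -/
noncomputable def gperp (S : Submodule ℝ (V × Module.Dual ℝ V)) :
    Submodule ℝ (V × Module.Dual ℝ V) where
  carrier := {a | ∀ b ∈ S, gpair a b = 0}
  add_mem' := by
    intro a b ha hb c hc
    rw [map_add, LinearMap.add_apply, ha c hc, hb c hc, add_zero]
  zero_mem' := by
    intro c hc
    rw [map_zero, LinearMap.zero_apply]
  smul_mem' := by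
    intro r a ha c hc
    rw [map_smul, LinearMap.smul_apply, ha c hc, smul_zero]

/-- A subspace of `𝕋V` is Lagrangian if it equals its own orthogonal complement. -/
def IsLagrangian (L : Submodule ℝ (V × Module.Dual ℝ V)) : Prop :=
  gperp L = L

/-- A linear map `π : V* → V` is skew-symmetric. -/
def IsSkew (π : Module.Dual ℝ V →ₗ[ℝ] V) : Prop :=
  ∀ ξ η : Module.Dual ℝ V, η (π ξ) = -(ξ (π η))

/-- The tangent product `L ⋆ R = {(u, ξ+η) : (u,ξ) ∈ L, (u,η) ∈ R}`. -/
def tanProd (L R : Submodule ℝ (V × Module.Dual ℝ V)) :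
    Submodule ℝ (V × Module.Dual ℝ V) where
  carrier := {a | ∃ ξ η : Module.Dual ℝ V, (a.1, ξ) ∈ L ∧ (a.1, η) ∈ R ∧ a.2 = ξ + η}
  add_mem' := by
    rintro a b ⟨ξ, η, h1, h2, h3⟩ ⟨ξ', η', h1', h2', h3'⟩
    refine ⟨ξ + ξ', η + η', ?_, ?_, ?_⟩
    · simpa [Prod.fst_add] using L.add_mem h1 h1'
    · simpa [Prod.fst_add] using R.add_mem h2 h2'
    · simp only [Prod.snd_add, h3, h3']; abel
  zero_mem' := ⟨0, 0, by simpa using (show ((0 : _), (0 : _)) ∈ L from L.zero_mem), by simpa using (show ((0 : _), (0 : _)) ∈ R from R.zero_mem), by simp⟩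
  smul_mem' := by
    rintro r a ⟨ξ, η, h1, h2, h3⟩
    refine ⟨r • ξ, r • η, ?_, ?_, ?_⟩
    · simpa [Prod.smul_fst] using L.smul_mem r h1
    · simpa [Prod.smul_fst] using R.smul_mem r h2
    · simp only [Prod.smul_snd, h3, smul_add]

/-- The cotangent product `L ⊛ R = {(u+v, ξ) : (u,ξ) ∈ L, (v,ξ) ∈ R}`. -/
def cotProd (L R : Submodule ℝ (V × Module.Dual ℝ V)) :
    Submodule ℝ (V × Module.Dual ℝ V) where
  carrier := {a | ∃ u v : V, (u, a.2) ∈ L ∧ (v, a.2) ∈ R ∧ a.1 = u + v}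
  add_mem' := by
    rintro a b ⟨u, v, h1, h2, h3⟩ ⟨u', v', h1', h2', h3'⟩
    refine ⟨u + u', v + v', ?_, ?_, ?_⟩
    · simpa [Prod.snd_add] using L.add_mem h1 h1'
    · simpa [Prod.snd_add] using R.add_mem h2 h2'
    · simp only [Prod.fst_add, h3, h3']; abel
  zero_mem' := ⟨0, 0, by simpa using (show ((0 : _), (0 : _)) ∈ L from L.zero_mem), by simpa using (show ((0 : _), (0 : _)) ∈ R from R.zero_mem), by simp⟩
  smul_mem' := by
    rintro r a ⟨u, v, h1, h2, h3⟩
    refine ⟨r • u, r • v, ?_, ?_, ?_⟩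
    · simpa [Prod.smul_snd] using L.smul_mem r h1
    · simpa [Prod.smul_snd] using R.smul_mem r h2
    · simp only [Prod.smul_fst, h3, smul_add]

/-- The backward image `φ^!(L) = {(u, η ∘ φ) : (φ(u), η) ∈ L}`. -/
def back (φ : V →ₗ[ℝ] W) (L : Submodule ℝ (W × Module.Dual ℝ W)) :
    Submodule ℝ (V × Module.Dual ℝ V) where
  carrier := {a | ∃ η : Module.Dual ℝ W, (φ a.1, η) ∈ L ∧ a.2 = η.comp φ}
  add_mem' := by
    rintro a b ⟨η, h1, h2⟩ ⟨η', h1', h2'⟩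
    refine ⟨η + η', ?_, ?_⟩
    · simpa [Prod.fst_add, map_add] using L.add_mem h1 h1'
    · simp only [Prod.snd_add, h2, h2', LinearMap.add_comp]
  zero_mem' := ⟨0, by simpa using (show ((0 : _), (0 : _)) ∈ L from L.zero_mem), by simp⟩
  smul_mem' := by
    rintro r a ⟨η, h1, h2⟩
    refine ⟨r • η, ?_, ?_⟩
    · simpa [Prod.smul_fst, map_smul] using L.smul_mem r h1
    · simp only [Prod.smul_snd, h2, LinearMap.smul_comp]

/-- The forward image `φ_!(L) = {(φ(u), η) : (u, η ∘ φ) ∈ L}`. -/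
def fwd (φ : V →ₗ[ℝ] W) (L : Submodule ℝ (V × Module.Dual ℝ V)) :
    Submodule ℝ (W × Module.Dual ℝ W) where
  carrier := {b | ∃ u : V, φ u = b.1 ∧ (u, b.2.comp φ) ∈ L}
  add_mem' := by
    rintro a b ⟨u, h1, h2⟩ ⟨u', h1', h2'⟩
    refine ⟨u + u', ?_, ?_⟩
    · simp only [map_add, h1, h1', Prod.fst_add]
    · have := L.add_mem h2 h2'
      simpa [Prod.snd_add, LinearMap.add_comp] using this
  zero_mem' := ⟨0, by simp, by simpa using (show ((0 : _), (0 : _)) ∈ L from L.zero_mem)⟩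
  smul_mem' := by
    rintro r a ⟨u, h1, h2⟩
    refine ⟨r • u, ?_, ?_⟩
    · simp only [map_smul, h1, Prod.smul_fst]
    · have := L.smul_mem r h2
      simpa [Prod.smul_snd, LinearMap.smul_comp] using this

/-- The graph `Gr(π) = {(π(ξ), ξ) : ξ ∈ V*}` of a map `π : V* → V`. -/
def gr (π : Module.Dual ℝ V →ₗ[ℝ] V) : Submodule ℝ (V × Module.Dual ℝ V) where
  carrier := {a | π a.2 = a.1}
  add_mem' := by
    intro a b ha hb
    simp only [Set.mem_setOf_eq, Prod.fst_add, Prod.snd_add, map_add] at *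
    rw [ha, hb]
  zero_mem' := by simp
  smul_mem' := by
    intro r a ha
    simp only [Set.mem_setOf_eq, Prod.smul_fst, Prod.smul_snd, map_smul] at *
    rw [ha]

namespace Submodule

variable {M N : Type*} [AddCommGroup M] [AddCommGroup N]

section Ring

variable {R : Type*} [Ring R] [Module R M] [Module R N]

theorem coe_eq_setOf_add_of_prodMk_mem (L : Submodule R (M × N)) (π : N →ₗ[R] M)
    (hπ : ∀ ξ ∈ L.map (LinearMap.snd R M N), (π ξ, ξ) ∈ L) :
    (L : Set (M × N)) = {a | ∃ v ∈ L.comap (LinearMap.inl R M N),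
      ∃ ξ ∈ L.map (LinearMap.snd R M N), a = (v + π ξ, ξ)} := by
  ext a
  constructor
  · intro ha
    have hξ : a.2 ∈ L.map (LinearMap.snd R M N) := mem_map_of_mem ha
    refine ⟨a.1 - π a.2, ?_, a.2, hξ, by simp⟩
    show (a.1 - π a.2, (0 : N)) ∈ L
    convert L.sub_mem ha (hπ a.2 hξ) using 1
    ext <;> simp
  · rintro ⟨v, hv, ξ, hξ, rfl⟩
    simpa using L.add_mem hv (hπ ξ hξ)

end Ring

section Field

variable {K : Type*} [Field K] [Module K M] [Module K N]

theorem exists_linearMap_prodMk_mem (L : Submodule K (M × N)) :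
    ∃ s : N →ₗ[K] M, ∀ ξ ∈ L.map (LinearMap.snd K M N), (s ξ, ξ) ∈ L := by
  let f : L →ₗ[K] N := LinearMap.snd K M N ∘ₗ L.subtype
  obtain ⟨g, hg⟩ := f.rangeRestrict.exists_rightInverse_of_surjective f.range_rangeRestrict
  obtain ⟨s, hs⟩ := (LinearMap.fst K M N ∘ₗ L.subtype ∘ₗ g).exists_extend
  refine ⟨s, fun ξ hξ => ?_⟩
  have hξ' : ξ ∈ LinearMap.range f := by rwa [LinearMap.range_comp, range_subtype]
  have hsnd : ((g ⟨ξ, hξ'⟩ : L) : M × N).2 = ξ := congr($(LinearMap.congr_fun hg ⟨ξ, hξ'⟩).1)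
  have hfst : s ξ = ((g ⟨ξ, hξ'⟩ : L) : M × N).1 := LinearMap.congr_fun hs ⟨ξ, hξ'⟩
  convert (g ⟨ξ, hξ'⟩).2 using 1
  exact Prod.ext hfst hsnd.symm

end Field

end Submodule

theorem gpair_apply (a b : V × Dual ℝ V) : gpair a b = a.2 b.1 + b.2 a.1 := rfl

theorem mem_comap_inl_iff {L : Submodule ℝ (V × Dual ℝ V)} {v : V} :
    v ∈ L.comap (LinearMap.inl ℝ V (Dual ℝ V)) ↔ (v, 0) ∈ L := Iff.rfl

namespace IsLagrangian

variable {L : Submodule ℝ (V × Dual ℝ V)}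

theorem pair_eq_zero (hL : IsLagrangian L) {a b : V × Dual ℝ V} (ha : a ∈ L) (hb : b ∈ L) :
    a.2 b.1 + b.2 a.1 = 0 := by
  rw [← hL] at ha
  exact ha b hb

theorem dualCoannihilator_map_snd (hL : IsLagrangian L) :
    (L.map (LinearMap.snd ℝ V (Dual ℝ V))).dualCoannihilator =
      L.comap (LinearMap.inl ℝ V (Dual ℝ V)) := by
  ext v
  simp only [Submodule.mem_dualCoannihilator, Submodule.mem_map, LinearMap.snd_apply,
    forall_exists_index, and_imp, forall_apply_eq_imp_iff₂, mem_comap_inl_iff]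
  constructor
  · intro hv
    rw [← hL]
    intro b hb
    simp [gpair_apply, hv b hb]
  · intro hv b hb
    simpa using hL.pair_eq_zero hb hv

theorem map_snd_eq_dualAnnihilator [FiniteDimensional ℝ V] (hL : IsLagrangian L) :
    L.map (LinearMap.snd ℝ V (Dual ℝ V)) =
      (L.comap (LinearMap.inl ℝ V (Dual ℝ V))).dualAnnihilator := by
  rw [← hL.dualCoannihilator_map_snd, Subspace.dualCoannihilator_dualAnnihilator_eq]

end IsLagrangian

theorem IsLagrangian.exists_isSkew_prodMk_mem [FiniteDimensional ℝ V]
    {L : Submodule ℝ (V × Dual ℝ V)} (hL : IsLagrangian L) :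
    ∃ π : Dual ℝ V →ₗ[ℝ] V, IsSkew π ∧
      ∀ ξ ∈ L.map (LinearMap.snd ℝ V (Dual ℝ V)), (π ξ, ξ) ∈ L := by
  set K := L.comap (LinearMap.inl ℝ V (Dual ℝ V))
  obtain ⟨s, hs⟩ := L.exists_linearMap_prodMk_mem
  obtain ⟨C, hKC⟩ := K.exists_isCompl
  let q : V →ₗ[ℝ] V := LinearMap.id - K.projection C hKC
  have hq_sub : ∀ v, v - q v ∈ K := fun v => by simp [q]
  have hq_of_mem : ∀ k ∈ K, q k = 0 := fun k hk => by
    simp [q, Submodule.projection_apply_of_mem_left hKC hk]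
  have hdual_mem : ∀ ξ, q.dualMap ξ ∈ L.map (LinearMap.snd ℝ V (Dual ℝ V)) := fun ξ => by
    rw [hL.map_snd_eq_dualAnnihilator, Submodule.mem_dualAnnihilator]
    intro k hk
    simp [hq_of_mem k hk]
  have hdual_eq : ∀ ξ ∈ L.map (LinearMap.snd ℝ V (Dual ℝ V)), q.dualMap ξ = ξ := by
    intro ξ hξ
    rw [hL.map_snd_eq_dualAnnihilator, Submodule.mem_dualAnnihilator] at hξ
    ext v
    have h := hξ _ (hq_sub v)
    rw [map_sub, sub_eq_zero] at h
    exact h.symm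
  refine ⟨q ∘ₗ s ∘ₗ q.dualMap, fun ξ η => ?_, fun ξ hξ => ?_⟩
  · have hiso := hL.pair_eq_zero (hs _ (hdual_mem ξ)) (hs _ (hdual_mem η))
    change ξ (q (s (q.dualMap η))) + η (q (s (q.dualMap ξ))) = 0 at hiso
    change η (q (s (q.dualMap ξ))) = -ξ (q (s (q.dualMap η)))
    linarith
  · have hK : (s ξ - q (s ξ), (0 : Dual ℝ V)) ∈ L := hq_sub (s ξ)
    simpa [hdual_eq ξ hξ] using L.sub_mem (hs ξ hξ) hK

theorem stmt13 [FiniteDimensional ℝ V]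
    (L : Submodule ℝ (V × Module.Dual ℝ V)) (hL : IsLagrangian L) :
    ∃ π : Module.Dual ℝ V →ₗ[ℝ] V, IsSkew π ∧
      (L : Set (V × Module.Dual ℝ V)) =
        {a | ∃ v ∈ L.comap (LinearMap.inl ℝ V (Module.Dual ℝ V)),
             ∃ ξ ∈ (L.comap (LinearMap.inl ℝ V (Module.Dual ℝ V))).dualAnnihilator,
             a = (v + π ξ, ξ)} := by
  obtain ⟨π, hπ_skew, hπ⟩ := hL.exists_isSkew_prodMk_mem
  refine ⟨π, hπ_skew, ?_⟩
  rw [L.coe_eq_setOf_add_of_prodMk_mem π hπ, hL.map_snd_eq_dualAnnihilator]
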